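/- arXiv:1605.06090 — 6 statements merged into one kernel-verified Lean document; each statement's English description precedes it below -/
import Mathlib

section
/- Every rational function f(x) = g(x)/h(x) over an algebraically closed field k̄ with deg g > deg h, where g and h are coprime, is equivalent under post-composition by a fractional linear transformation to a unique rational function G(x)/H(x) in standard form: G and H monic, deg G > deg H, G and H coprime, and the coefficient of x^(deg H) in G is zero. -/
open Polynomial

/-- The Wronskian of the rational function `g / h`. -/
noncomputable def wron {K : Type*} [Field K] (g h : K[X]) : K[X] :=
  h * derivative g - g * derivative h

/-- `g₂ / h₂ = σ ∘ (g₁ / h₁)` for some fractional linear transformation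
`σ(x) = (a x + b)/(c x + d)`, `a d - b c ≠ 0`; the equality of rational functions is
expressed by cross multiplication. -/
def RatEquiv {K : Type*} [Field K] (g₁ h₁ g₂ h₂ : K[X]) : Prop :=
  ∃ a b c d : K, a * d - b * c ≠ 0 ∧
    g₂ * (C c * g₁ + C d * h₁) = (C a * g₁ + C b * h₁) * h₂

/-- Standard form of a rational function `g / h`: `g` and `h` monic and coprime,
`deg g > deg h`, and `g` has no term of degree `deg h`. -/
def StdForm {K : Type*} [Field K] (g h : K[X]) : Prop :=
  g.Monic ∧ h.Monic ∧ h.degree < g.degree ∧ IsCoprime g h ∧ g.coeff h.natDegree = 0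

private lemma deg_aux {K : Type*} [Field K] {g h : K[X]} (hdeg : h.degree < g.degree)
    {a : K} (b : K) (ha : a ≠ 0) :
    (C a * g + C b * h).degree = g.degree ∧
    (C a * g + C b * h).leadingCoeff = a * g.leadingCoeff := by
  have h1 : (C b * h).degree < (C a * g).degree := by
    calc (C b * h).degree ≤ (C b).degree + h.degree := degree_mul_le _ _
    _ ≤ 0 + h.degree := add_le_add degree_C_le le_rfl
    _ = h.degree := zero_add _
    _ < g.degree := hdeg
    _ = (C a * g).degree := (degree_C_mul ha).symm
  refine ⟨?_, ?_⟩
  · rw [degree_add_eq_left_of_degree_lt h1, degree_C_mul ha]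
  · rw [add_comm, leadingCoeff_add_of_degree_lt h1, leadingCoeff_mul, leadingCoeff_C]

private lemma cop_aux {K : Type*} [Field K] {g h : K[X]} (hcop : IsCoprime g h)
    {a d : K} (b : K) (ha : a ≠ 0) (hd : d ≠ 0) :
    IsCoprime (C a * g + C b * h) (C d * h) := by
  rw [isCoprime_mul_unit_left_right (isUnit_C.2 (isUnit_iff_ne_zero.2 hd)) _ _]
  exact ((isCoprime_mul_unit_left_left (isUnit_C.2 (isUnit_iff_ne_zero.2 ha)) _ _).2
    hcop).add_mul_right_left (C b)

private lemma std_aux {K : Type*} [Field K] {g h : K[X]} (hh : h ≠ 0)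
    (hcop : IsCoprime g h) (hdeg : h.degree < g.degree)
    {a b d : K} (ha : a ≠ 0) (hd : d ≠ 0) :
    StdForm (C a * g + C b * h) (C d * h) ↔
      (a = g.leadingCoeff⁻¹ ∧
        b = -(g.leadingCoeff⁻¹ * g.coeff h.natDegree) * h.leadingCoeff⁻¹ ∧
        d = h.leadingCoeff⁻¹) := by
  have hg : g ≠ 0 := by
    intro h0
    rw [h0, degree_zero] at hdeg
    exact not_lt_bot hdeg
  have hlg : g.leadingCoeff ≠ 0 := leadingCoeff_ne_zero.2 hg
  have hlh : h.leadingCoeff ≠ 0 := leadingCoeff_ne_zero.2 hh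
  have hnd : (C d * h).natDegree = h.natDegree := natDegree_C_mul hd
  have hcoeff : (C a * g + C b * h).coeff h.natDegree
      = a * g.coeff h.natDegree + b * h.leadingCoeff := by
    rw [coeff_add, coeff_C_mul, coeff_C_mul, coeff_natDegree]
  constructor
  · rintro ⟨hm1, hm2, -, -, hc⟩
    have e1 : a * g.leadingCoeff = 1 := by
      rw [← (deg_aux hdeg b ha).2]; exact hm1
    have e2 : d * h.leadingCoeff = 1 := by
      rw [show d * h.leadingCoeff = (C d * h).leadingCoeff by
        rw [leadingCoeff_mul, leadingCoeff_C]]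
      exact hm2
    have ea : a = g.leadingCoeff⁻¹ := eq_inv_of_mul_eq_one_left e1
    have ed : d = h.leadingCoeff⁻¹ := eq_inv_of_mul_eq_one_left e2
    refine ⟨ea, ?_, ed⟩
    rw [hnd, hcoeff] at hc
    have hb : b = -(a * g.coeff h.natDegree) * h.leadingCoeff⁻¹ := by
      rw [eq_mul_inv_iff_mul_eq₀ hlh]
      linear_combination hc
    rw [ea] at hb
    exact hb
  · rintro ⟨rfl, rfl, rfl⟩
    refine ⟨?_, ?_, ?_, cop_aux hcop _ ha hd, ?_⟩
    · have := (deg_aux hdeg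
        (-(g.leadingCoeff⁻¹ * g.coeff h.natDegree) * h.leadingCoeff⁻¹) ha).2
      unfold Monic
      rw [this, inv_mul_cancel₀ hlg]
    · unfold Monic
      rw [leadingCoeff_mul, leadingCoeff_C, inv_mul_cancel₀ hlh]
    · rw [(deg_aux hdeg _ ha).1, degree_C_mul hd]
      exact hdeg
    · rw [hnd, hcoeff]
      field_simp
      ring

/-- Every rational function `g/h` over an algebraically closed field with `deg g > deg h`,
`g, h` coprime, is equivalent (under post-composition by a fractional linear transformation)
to a unique rational function in standard form. -/
theorem stmt_0 {K : Type*} [Field K] [IsAlgClosed K] (g h : K[X]) (hh : h ≠ 0)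
    (hcop : IsCoprime g h) (hdeg : h.degree < g.degree) :
    ∃! p : K[X] × K[X], StdForm p.1 p.2 ∧ RatEquiv g h p.1 p.2 := by
  have hg : g ≠ 0 := by
    intro h0
    rw [h0, degree_zero] at hdeg
    exact not_lt_bot hdeg
  have hlg : g.leadingCoeff ≠ 0 := leadingCoeff_ne_zero.2 hg
  have hlh : h.leadingCoeff ≠ 0 := leadingCoeff_ne_zero.2 hh
  set a₀ : K := g.leadingCoeff⁻¹ with ha₀def
  set b₀ : K := -(g.leadingCoeff⁻¹ * g.coeff h.natDegree) * h.leadingCoeff⁻¹ with hb₀def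
  set d₀ : K := h.leadingCoeff⁻¹ with hd₀def
  have ha₀ : a₀ ≠ 0 := inv_ne_zero hlg
  have hd₀ : d₀ ≠ 0 := inv_ne_zero hlh
  refine ⟨(C a₀ * g + C b₀ * h, C d₀ * h), ⟨?_, ?_⟩, ?_⟩
  · exact (std_aux hh hcop hdeg ha₀ hd₀).2 ⟨rfl, rfl, rfl⟩
  · exact ⟨a₀, b₀, 0, d₀, by simpa using mul_ne_zero ha₀ hd₀, by
      simp only [map_zero, zero_mul, zero_add]⟩
  · rintro ⟨G, H⟩ ⟨hstd, a, b, c, d, hΔ, heq⟩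
    obtain ⟨hGm, hHm, hGH, hcGH, hcoe⟩ := hstd
    dsimp only at hGm hHm hGH hcGH hcoe heq
    have hH0 : H ≠ 0 := hHm.ne_zero
    have hG0 : G ≠ 0 := hGm.ne_zero
    -- notation
    set P : K[X] := C a * g + C b * h with hPdef
    set Q : K[X] := C c * g + C d * h with hQdef
    -- Q ≠ 0
    have hQ0 : Q ≠ 0 := by
      intro h0
      have hP0 : P = 0 := by
        have := heq
        rw [h0, mul_zero] at this
        rcases mul_eq_zero.1 this.symm with h' | h'
        · exact h'
        · exact absurd h' hH0
      have key : C (a * d - b * c) * g = C d * P - C b * Q := by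
        rw [hPdef, hQdef, map_sub, map_mul, map_mul]
        ring
      rw [hP0, h0, mul_zero, mul_zero, sub_zero] at key
      rcases mul_eq_zero.1 key with h' | h'
      · exact hΔ (by simpa using C_eq_zero.1 h')
      · exact hg h'
    -- c = 0
    have hc : c = 0 := by
      by_contra hc0
      have hdQ : Q.degree = g.degree := (deg_aux hdeg d hc0).1
      have hdP : P.degree ≤ g.degree := by
        refine le_trans (degree_add_le _ _) (max_le ?_ ?_)
        · calc (C a * g).degree ≤ (C a).degree + g.degree := degree_mul_le _ _
          _ ≤ 0 + g.degree := add_le_add degree_C_le le_rfl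
          _ = g.degree := zero_add _
        · calc (C b * h).degree ≤ (C b).degree + h.degree := degree_mul_le _ _
          _ ≤ 0 + h.degree := add_le_add degree_C_le le_rfl
          _ = h.degree := zero_add _
          _ ≤ g.degree := le_of_lt hdeg
      have hbot : g.degree ≠ ⊥ := fun hb => hg (degree_eq_bot.1 hb)
      have h1 : (G * Q).degree = g.degree + G.degree := by
        rw [degree_mul, hdQ, add_comm]
      have h2 : (P * H).degree < g.degree + G.degree := by
        calc (P * H).degree ≤ P.degree + H.degree := degree_mul_le _ _
        _ ≤ g.degree + H.degree := add_le_add hdP le_rfl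
        _ < g.degree + G.degree := WithBot.add_lt_add_left hbot hGH
      rw [← heq, h1] at h2
      exact lt_irrefl _ h2
    subst hc
    have had : a * d ≠ 0 := by simpa using hΔ
    have ha : a ≠ 0 := left_ne_zero_of_mul had
    have hd : d ≠ 0 := right_ne_zero_of_mul had
    have heq' : G * (C d * h) = P * H := by
      rw [← heq, hQdef]
      simp
    have hPh : IsCoprime P h :=
      ((isCoprime_mul_unit_left_left (isUnit_C.2 (isUnit_iff_ne_zero.2 ha)) _ _).2
        hcop).add_mul_right_left (C b)
    have hhH : h ∣ H := (hPh.symm).dvd_of_dvd_mul_left ⟨G * C d, by rw [← heq']; ring⟩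
    obtain ⟨t, ht⟩ := hhH
    have heq2 : G * C d = P * t := by
      apply mul_left_cancel₀ hh
      calc h * (G * C d) = G * (C d * h) := by ring
      _ = P * H := heq'
      _ = h * (P * t) := by rw [ht]; ring
    have hGt : IsCoprime G t := hcGH.of_isCoprime_of_dvd_right ⟨h, by rw [ht]; ring⟩
    have hGP : G ∣ P := hGt.dvd_of_dvd_mul_right ⟨C d, heq2.symm⟩
    have hPG : P ∣ G := ((isUnit_C.2 (isUnit_iff_ne_zero.2 hd)).dvd_mul_right).1 ⟨t, heq2⟩
    obtain ⟨u, hu⟩ := associated_of_dvd_dvd hPG hGP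
    obtain ⟨r, hrU, hrC⟩ := Polynomial.isUnit_iff.1 u.isUnit
    have hr0 : r ≠ 0 := hrU.ne_zero
    have hP0 : P ≠ 0 := by
      intro h0
      rw [h0, zero_mul] at hu
      exact hG0 hu.symm
    have hGeq : G = C (r * a) * g + C (r * b) * h := by
      rw [← hu, ← hrC, hPdef, map_mul, map_mul]
      ring
    have ht2 : t = C (r * d) := by
      apply mul_left_cancel₀ hP0
      calc P * t = G * C d := heq2.symm
      _ = (P * C r) * C d := by rw [← hu, ← hrC]
      _ = P * C (r * d) := by rw [map_mul]; ring
    have hHeq : H = C (r * d) * h := by rw [ht, ht2]; ring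
    have hra : r * a ≠ 0 := mul_ne_zero hr0 ha
    have hrd : r * d ≠ 0 := mul_ne_zero hr0 hd
    have hstd' : StdForm (C (r * a) * g + C (r * b) * h) (C (r * d) * h) := by
      rw [← hGeq, ← hHeq]
      exact ⟨hGm, hHm, hGH, hcGH, hcoe⟩
    obtain ⟨e1, e2, e3⟩ := (std_aux hh hcop hdeg hra hrd).1 hstd'
    simp only [Prod.mk.injEq]
    constructor
    · rw [hGeq, e1, e2]
    · rw [hHeq, e3]
end

section
/- If f₁ = g₁/h₁ and f₂ = g₂/h₂ are two rational functions in standard form (gᵢ, hᵢ monic coprime polynomials, deg gᵢ > deg hᵢ, gᵢ has no term of degree deg hᵢ) over a field, and f₂ = σ ∘ f₁ for some fractional linear transformation σ, then σ is the identity and f₁ = f₂. -/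
open Polynomial

/-- If `f₁ = g₁/h₁` and `f₂ = g₂/h₂` are in standard form and `f₂ = σ ∘ f₁` for a
fractional linear transformation `σ(x) = (a x + b)/(c x + d)` (`a d - b c ≠ 0`,
the equality of rational functions being expressed by cross multiplication), then
`σ` is the identity (`b = 0`, `c = 0`, `a = d`) and `f₁ = f₂`. -/
theorem stmt_1 {K : Type*} [Field K] (g₁ h₁ g₂ h₂ : K[X])
    (hf₁ : StdForm g₁ h₁) (hf₂ : StdForm g₂ h₂) (a b c d : K)
    (hdet : a * d - b * c ≠ 0)
    (heq : g₂ * (C c * g₁ + C d * h₁) = (C a * g₁ + C b * h₁) * h₂) :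
    b = 0 ∧ c = 0 ∧ a = d ∧ g₁ = g₂ ∧ h₁ = h₂ := by
  obtain ⟨mg₁, mh₁, hdeg₁, hcop₁, hcoef₁⟩ := hf₁
  obtain ⟨mg₂, mh₂, hdeg₂, hcop₂, hcoef₂⟩ := hf₂
  have hg₁0 : g₁ ≠ 0 := mg₁.ne_zero
  have hh₁0 : h₁ ≠ 0 := mh₁.ne_zero
  have hg₂0 : g₂ ≠ 0 := mg₂.ne_zero
  have hh₂0 : h₂ ≠ 0 := mh₂.ne_zero
  have hg₁bot : g₁.degree ≠ ⊥ := fun h => hg₁0 (degree_eq_bot.mp h)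
  have hCle : ∀ (x : K) (p : K[X]), (C x * p).degree ≤ p.degree := fun x p =>
    (degree_mul_le _ _).trans (by simpa using add_le_add_left (degree_C_le (a := x)) p.degree)
  -- First: c = 0
  have hc : c = 0 := by
    by_contra hc
    have hd1 : (C c * g₁ + C d * h₁).degree = g₁.degree := by
      rw [degree_add_eq_left_of_degree_lt, degree_C_mul hc]
      rw [degree_C_mul hc]
      exact lt_of_le_of_lt (hCle d h₁) hdeg₁
    have h1 : (g₂ * (C c * g₁ + C d * h₁)).degree = g₂.degree + g₁.degree := by
      rw [degree_mul, hd1]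
    have h2 : ((C a * g₁ + C b * h₁) * h₂).degree < g₂.degree + g₁.degree := by
      calc ((C a * g₁ + C b * h₁) * h₂).degree
          ≤ (C a * g₁ + C b * h₁).degree + h₂.degree := degree_mul_le _ _
        _ ≤ g₁.degree + h₂.degree := by
            refine add_le_add_left ?_ _
            exact (degree_add_le _ _).trans (max_le (hCle a g₁)
              ((hCle b h₁).trans hdeg₁.le))
        _ < g₁.degree + g₂.degree := by
            exact WithBot.add_lt_add_left hg₁bot hdeg₂
        _ = g₂.degree + g₁.degree := add_comm _ _
    rw [heq] at h1
    exact h2.ne h1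
  subst hc
  rw [map_zero, zero_mul, zero_add] at heq
  have had : a * d ≠ 0 := by simpa using hdet
  have ha : a ≠ 0 := left_ne_zero_of_mul had
  have hd : d ≠ 0 := right_ne_zero_of_mul had
  have hCd : IsUnit (C d) := isUnit_C.mpr hd.isUnit
  have hCa : IsUnit (C a) := isUnit_C.mpr ha.isUnit
  -- h₂ ∣ h₁
  have h21 : h₂ ∣ h₁ := by
    have : h₂ ∣ g₂ * (C d * h₁) := heq ▸ Dvd.intro_left _ rfl
    have := hcop₂.symm.dvd_of_dvd_mul_left this
    exact (hCd.dvd_mul_left).mp this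
  -- h₁ coprime to (C a * g₁ + C b * h₁)
  have hcopX : IsCoprime (C a * g₁ + C b * h₁) h₁ := by
    have h0 : IsCoprime (C a * g₁) h₁ := (isCoprime_mul_unit_left_left hCa _ _).mpr hcop₁
    have := h0.add_mul_left_left (C b)
    rwa [mul_comm h₁ (C b)] at this
  -- h₁ ∣ h₂
  have h12 : h₁ ∣ h₂ := by
    have : h₁ ∣ (C a * g₁ + C b * h₁) * h₂ := heq ▸ Dvd.dvd.mul_left (dvd_mul_left h₁ (C d)) g₂
    exact hcopX.symm.dvd_of_dvd_mul_left this
  have hh : h₁ = h₂ := eq_of_monic_of_associated mh₁ mh₂ (associated_of_dvd_dvd h12 h21)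
  subst hh
  -- cancel h₁
  have key : C d * g₂ = C a * g₁ + C b * h₁ := by
    have : (C d * g₂) * h₁ = (C a * g₁ + C b * h₁) * h₁ := by
      rw [← heq]; ring
    exact mul_right_cancel₀ hh₁0 this
  -- degree comparison inside the sum
  have hdlt : (C b * h₁).degree < (C a * g₁).degree := by
    rw [degree_C_mul ha]
    exact lt_of_le_of_lt (hCle b h₁) hdeg₁
  -- a = d from leading coefficients
  have hda : d = a := by
    have := congrArg leadingCoeff key
    rwa [leadingCoeff_add_of_degree_lt' hdlt, leadingCoeff_mul, leadingCoeff_mul,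
      leadingCoeff_C, leadingCoeff_C, mg₁.leadingCoeff, mg₂.leadingCoeff,
      mul_one, mul_one] at this
  -- b = 0 from the coefficient in degree natDegree h₁
  have hb : b = 0 := by
    have := congrArg (fun p => p.coeff h₁.natDegree) key
    simpa [coeff_add, coeff_C_mul, hcoef₁, hcoef₂, mh₁.coeff_natDegree] using this.symm
  subst hb
  rw [map_zero, zero_mul, add_zero, hda] at key
  have hg : g₁ = g₂ := (mul_left_cancel₀ hCa.ne_zero key.symm)
  exact ⟨rfl, rfl, hda.symm, hg, rfl⟩
end

section
/- A rational function in standard form g/h over the algebraic closure of a field k is equivalent (under post-composition by fractional linear transformations) to a rational function defined over k if and only if g and h both have all coefficients in k. -/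
open Polynomial

section Aux

variable {F : Type*} [Field F]

lemma aux_degree_C_mul_le (a : F) (p : F[X]) : (C a * p).degree ≤ p.degree := by
  by_cases ha : a = 0
  · simp [ha]
  · exact le_of_eq (degree_C_mul ha)

lemma aux_degree_comb {a : F} (b : F) {g h : F[X]} (ha : a ≠ 0)
    (hlt : h.degree < g.degree) : (C a * g + C b * h).degree = g.degree := by
  rw [degree_add_eq_left_of_degree_lt, degree_C_mul ha]
  exact lt_of_le_of_lt (aux_degree_C_mul_le b h)
    (lt_of_lt_of_le hlt (le_of_eq (degree_C_mul ha).symm))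

lemma StdForm.indep {g h : F[X]} (hs : StdForm g h) :
    ∀ a b : F, C a * g + C b * h = 0 → a = 0 ∧ b = 0 := by
  obtain ⟨hg, hh, hdeg, -, -⟩ := hs
  intro a b hab
  by_cases ha : a = 0
  · refine ⟨ha, ?_⟩
    rw [ha, C_0, zero_mul, zero_add] at hab
    rcases mul_eq_zero.mp hab with h1 | h1
    · simpa using h1
    · exact absurd h1 hh.ne_zero
  · exfalso
    have h1 := aux_degree_comb b ha hdeg
    rw [hab, degree_zero] at h1
    exact hg.ne_zero (degree_eq_bot.mp h1.symm)

/-- Uniqueness of the standard form in an equivalence class. -/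
lemma stdForm_unique {g₁ h₁ g₂ h₂ : F[X]} (s₁ : StdForm g₁ h₁) (s₂ : StdForm g₂ h₂)
    (hre : RatEquiv g₁ h₁ g₂ h₂) : g₁ = g₂ ∧ h₁ = h₂ := by
  obtain ⟨a, b, c, d, hdet, E⟩ := hre
  obtain ⟨hg₁, hh₁, hd₁, hc₁, hz₁⟩ := s₁
  obtain ⟨hg₂, hh₂, hd₂, hc₂, hz₂⟩ := s₂
  -- coprimality of the two linear combinations
  obtain ⟨u, v, huv⟩ := hc₁
  have key : (u * C d - v * C c) * (C a * g₁ + C b * h₁)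
      + (v * C a - u * C b) * (C c * g₁ + C d * h₁)
      = C a * C d - C b * C c := by
    linear_combination (C a * C d - C b * C c) * huv
  have he : (C a * C d - C b * C c : F[X]) = C (a * d - b * c) := by
    rw [← C_mul, ← C_mul, ← C_sub]
  have hcopAC : IsCoprime (C a * g₁ + C b * h₁) (C c * g₁ + C d * h₁) := by
    refine ⟨C (a * d - b * c)⁻¹ * (u * C d - v * C c),
      C (a * d - b * c)⁻¹ * (v * C a - u * C b), ?_⟩
    rw [mul_assoc, mul_assoc, ← mul_add, key, he, ← C_mul, inv_mul_cancel₀ hdet, C_1]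
  -- divisibilities
  have hdvd1 : h₂ ∣ (C c * g₁ + C d * h₁) := by
    refine hc₂.symm.dvd_of_dvd_mul_left ⟨C a * g₁ + C b * h₁, ?_⟩
    rw [E]; ring
  have hdvd2 : g₂ ∣ (C a * g₁ + C b * h₁) :=
    hc₂.dvd_of_dvd_mul_right ⟨C c * g₁ + C d * h₁, E.symm⟩
  obtain ⟨w, hw⟩ := hdvd2
  obtain ⟨w', hw'⟩ := hdvd1
  have hww : (g₂ * h₂) * w' = (g₂ * h₂) * w := by
    rw [hw, hw'] at E
    linear_combination E
  have hww' : w' = w := mul_left_cancel₀ (mul_ne_zero hg₂.ne_zero hh₂.ne_zero) hww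
  subst hww'
  have hwunit : IsUnit w' :=
    hcopAC.isUnit_of_dvd' ⟨g₂, by rw [hw]; ring⟩ ⟨h₂, by rw [hw']; ring⟩
  obtain ⟨r, hr, hrw⟩ := Polynomial.isUnit_iff.mp hwunit
  have hr0 : r ≠ 0 := hr.ne_zero
  rw [← hrw] at hw hw'
  -- now degree analysis: first `a ≠ 0`
  have ha : a ≠ 0 := by
    intro ha
    have hb : b ≠ 0 := fun hb => hdet (by rw [ha, hb]; ring)
    have hcc : c ≠ 0 := fun hcc => hdet (by rw [ha, hcc]; ring)
    have hdA : (C a * g₁ + C b * h₁).degree = h₁.degree := by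
      rw [ha, C_0, zero_mul, zero_add, degree_C_mul hb]
    have hdC : (C c * g₁ + C d * h₁).degree = g₁.degree := aux_degree_comb d hcc hd₁
    rw [hw, degree_mul, degree_C hr0, add_zero] at hdA
    rw [hw', degree_mul, degree_C hr0, add_zero] at hdC
    rw [hdA, hdC] at hd₂
    exact lt_irrefl _ (hd₁.trans hd₂)
  have hdA : (C a * g₁ + C b * h₁).degree = g₁.degree := aux_degree_comb b ha hd₁
  have hdgg : g₂.degree = g₁.degree := by
    rw [hw, degree_mul, degree_C hr0, add_zero] at hdA; exact hdA
  have hcz : c = 0 := by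
    by_contra hcc
    have hdC : (C c * g₁ + C d * h₁).degree = g₁.degree := aux_degree_comb d hcc hd₁
    have hdh₂ : h₂.degree = g₁.degree := by
      rw [hw', degree_mul, degree_C hr0, add_zero] at hdC; exact hdC
    rw [hdh₂, hdgg] at hd₂
    exact lt_irrefl _ hd₂
  have hd0 : d ≠ 0 := fun hd' => hdet (by rw [hcz, hd']; ring)
  rw [hcz, C_0, zero_mul, zero_add] at hw'
  -- hw' : C d * h₁ = h₂ * C r
  have hdh : h₁.degree = h₂.degree := by
    have := congrArg degree hw'
    rwa [degree_C_mul hd0, degree_mul, degree_C hr0, add_zero] at this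
  have hNdh : h₁.natDegree = h₂.natDegree := natDegree_eq_of_degree_eq hdh
  have hdr : d = r := by
    have h3 := congrArg (fun p => coeff p h₁.natDegree) hw'
    simp only [coeff_C_mul, coeff_mul_C] at h3
    rwa [hh₁.coeff_natDegree, hNdh, hh₂.coeff_natDegree, mul_one, one_mul] at h3
  have hh12 : h₁ = h₂ := by
    have h4 : C d * h₁ = C d * h₂ := by rw [hw', ← hdr, mul_comm]
    exact mul_left_cancel₀ (C_ne_zero.mpr hd0) h4
  -- compare coefficients in hw : C a * g₁ + C b * h₁ = g₂ * C r
  have hNdg : g₁.natDegree = g₂.natDegree := natDegree_eq_of_degree_eq hdgg.symm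
  have har : a = r := by
    have h5 := congrArg (fun p => coeff p g₁.natDegree) hw
    simp only [coeff_add, coeff_C_mul, coeff_mul_C] at h5
    rwa [hg₁.coeff_natDegree,
      coeff_eq_zero_of_degree_lt (hd₁.trans_eq (degree_eq_natDegree hg₁.ne_zero)),
      hNdg, hg₂.coeff_natDegree, mul_one, mul_zero, add_zero, one_mul] at h5
  have hb0 : b = 0 := by
    have h6 := congrArg (fun p => coeff p h₁.natDegree) hw
    simp only [coeff_add, coeff_C_mul, coeff_mul_C] at h6
    rw [hz₁, hh₁.coeff_natDegree, mul_zero, zero_add, mul_one] at h6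
    rw [hh12] at h6
    rw [hz₂, zero_mul] at h6
    exact h6
  have hg12 : g₁ = g₂ := by
    rw [hb0, C_0, zero_mul, add_zero] at hw
    have h7 : C a * g₁ = C a * g₂ := by rw [hw, ← har, mul_comm]
    exact mul_left_cancel₀ (C_ne_zero.mpr ha) h7
  exact ⟨hg12, hh12⟩

/-- Transitivity of `RatEquiv` when the middle denominator is nonzero. -/
lemma ratEquiv_trans {g₁ h₁ g₂ h₂ g₃ h₃ : F[X]} (hne : h₂ ≠ 0)
    (r12 : RatEquiv g₁ h₁ g₂ h₂) (r23 : RatEquiv g₂ h₂ g₃ h₃) :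
    RatEquiv g₁ h₁ g₃ h₃ := by
  obtain ⟨a₁, b₁, c₁, d₁, det₁, E₁⟩ := r12
  obtain ⟨a₂, b₂, c₂, d₂, det₂, E₂⟩ := r23
  refine ⟨a₂ * a₁ + b₂ * c₁, a₂ * b₁ + b₂ * d₁, c₂ * a₁ + d₂ * c₁, c₂ * b₁ + d₂ * d₁, ?_, ?_⟩
  · have h0 : (a₂ * a₁ + b₂ * c₁) * (c₂ * b₁ + d₂ * d₁)
        - (a₂ * b₁ + b₂ * d₁) * (c₂ * a₁ + d₂ * c₁)
        = (a₁ * d₁ - b₁ * c₁) * (a₂ * d₂ - b₂ * c₂) := by ring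
    rw [h0]
    exact mul_ne_zero det₁ det₂
  · apply mul_left_cancel₀ hne
    simp only [C_add, C_mul]
    linear_combination (C a₂ * h₃ - C c₂ * g₃) * E₁ + (C c₁ * g₁ + C d₁ * h₁) * E₂

lemma ratEquiv_map {F L : Type*} [Field F] [Field L] (φ : F →+* L) {g₁ h₁ g₂ h₂ : F[X]}
    (hre : RatEquiv g₁ h₁ g₂ h₂) :
    RatEquiv (g₁.map φ) (h₁.map φ) (g₂.map φ) (h₂.map φ) := by
  obtain ⟨a, b, c, d, det, E⟩ := hre
  refine ⟨φ a, φ b, φ c, φ d, ?_, ?_⟩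
  · rw [← map_mul, ← map_mul, ← map_sub]
    exact (map_ne_zero_iff φ φ.injective).mpr det
  · have h1 := congrArg (Polynomial.map φ) E
    simpa only [Polynomial.map_mul, Polynomial.map_add, map_C] using h1

lemma stdForm_map {F L : Type*} [Field F] [Field L] (φ : F →+* L) {g h : F[X]}
    (hs : StdForm g h) : StdForm (g.map φ) (h.map φ) := by
  obtain ⟨hg, hh, hd, hc, hz⟩ := hs
  refine ⟨hg.map φ, hh.map φ, ?_, ?_, ?_⟩
  · rwa [degree_map, degree_map]
  · have := hc.map (mapRingHom φ)
    simpa using this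
  · rw [natDegree_map, coeff_map, hz, map_zero]

/-- Normalization: from a coprime pair with `deg Q < deg P`, produce a standard form. -/
lemma stdForm_of_deg_lt {P Q : F[X]} (hc : IsCoprime P Q) (hQ : Q ≠ 0)
    (hd : Q.degree < P.degree) :
    ∃ G' H', StdForm G' H' ∧ RatEquiv P Q G' H' := by
  have hP : P ≠ 0 := by
    intro h0
    rw [h0, degree_zero] at hd
    exact not_lt_bot hd
  have hlp : P.leadingCoeff ≠ 0 := leadingCoeff_ne_zero.mpr hP
  have hlq : Q.leadingCoeff ≠ 0 := leadingCoeff_ne_zero.mpr hQ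
  set P₁ : F[X] := P * C P.leadingCoeff⁻¹ with hP₁
  set H' : F[X] := Q * C Q.leadingCoeff⁻¹ with hH'
  have hmP : P₁.Monic := monic_mul_leadingCoeff_inv hP
  have hmH : H'.Monic := monic_mul_leadingCoeff_inv hQ
  have hdP₁ : P₁.degree = P.degree := degree_mul_leadingCoeff_inv P hP
  have hdH : H'.degree = Q.degree := degree_mul_leadingCoeff_inv Q hQ
  have hdlt : H'.degree < P₁.degree := by rw [hdP₁, hdH]; exact hd
  set μ : F := P₁.coeff H'.natDegree with hμ
  set G' : F[X] := P₁ - C μ * H' with hG'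
  have hdCμ : (C μ * H').degree < P₁.degree :=
    lt_of_le_of_lt (aux_degree_C_mul_le μ H') hdlt
  have hmG : G'.Monic := by
    have : G' = P₁ + -(C μ * H') := by rw [hG']; ring
    rw [this]
    exact hmP.add_of_left (by rwa [degree_neg])
  have hdG : G'.degree = P₁.degree := degree_sub_eq_left_of_degree_lt hdCμ
  have hcP₁H : IsCoprime P₁ H' := by
    rw [hP₁, hH']
    rw [isCoprime_mul_unit_right_left (isUnit_C.mpr (inv_ne_zero hlp).isUnit) _ _,
      isCoprime_mul_unit_right_right (isUnit_C.mpr (inv_ne_zero hlq).isUnit) _ _]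
    exact hc
  have hcG : IsCoprime G' H' := by
    have h1 := hcP₁H.add_mul_left_left (-(C μ))
    have h2 : P₁ + H' * -(C μ) = G' := by rw [hG']; ring
    rwa [h2] at h1
  refine ⟨G', H', ⟨hmG, hmH, by rwa [hdG], hcG, ?_⟩, ?_⟩
  · rw [hG', coeff_sub, coeff_C_mul, hmH.coeff_natDegree, mul_one, ← hμ, sub_self]
  · refine ⟨P.leadingCoeff⁻¹, -(μ * Q.leadingCoeff⁻¹), 0, Q.leadingCoeff⁻¹, ?_, ?_⟩
    · have : P.leadingCoeff⁻¹ * Q.leadingCoeff⁻¹ - -(μ * Q.leadingCoeff⁻¹) * 0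
          = P.leadingCoeff⁻¹ * Q.leadingCoeff⁻¹ := by ring
      rw [this]
      exact mul_ne_zero (inv_ne_zero hlp) (inv_ne_zero hlq)
    · rw [hG', hH', hP₁]
      simp only [C_neg, C_mul, C_0]
      ring

/-- Degree arrangement: from an independent coprime pair, obtain an equivalent pair
with strictly decreasing degrees. -/
lemma exists_deg_lt {P Q : F[X]} (hc : IsCoprime P Q)
    (hind : ∀ u v : F, C u * P + C v * Q = 0 → u = 0 ∧ v = 0) :
    ∃ P' Q', IsCoprime P' Q' ∧ Q' ≠ 0 ∧ Q'.degree < P'.degree ∧ RatEquiv P Q P' Q' := by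
  have hP : P ≠ 0 := by
    intro h0
    have := (hind 1 0 (by rw [h0, C_0, C_1]; ring)).1
    exact one_ne_zero this
  have hQ : Q ≠ 0 := by
    intro h0
    have := (hind 0 1 (by rw [h0, C_0, C_1]; ring)).2
    exact one_ne_zero this
  rcases lt_trichotomy Q.degree P.degree with hlt | heq | hgt
  · exact ⟨P, Q, hc, hQ, hlt, ⟨1, 0, 0, 1, by norm_num, by simp⟩⟩
  · set lam : F := P.leadingCoeff * Q.leadingCoeff⁻¹ with hlam
    have hlam0 : lam ≠ 0 :=
      mul_ne_zero (leadingCoeff_ne_zero.mpr hP) (inv_ne_zero (leadingCoeff_ne_zero.mpr hQ))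
    have hdeq : P.degree = (C lam * Q).degree := by rw [degree_C_mul hlam0, heq]
    have hlceq : P.leadingCoeff = (C lam * Q).leadingCoeff := by
      rw [leadingCoeff_mul, leadingCoeff_C, hlam, mul_assoc,
        inv_mul_cancel₀ (leadingCoeff_ne_zero.mpr hQ), mul_one]
    have hRdeg : (P - C lam * Q).degree < Q.degree := by
      rw [heq]
      exact degree_sub_lt hdeq hP hlceq
    have hR0 : P - C lam * Q ≠ 0 := by
      intro h0
      have h1 : C (1 : F) * P + C (-lam) * Q = 0 := by
        rw [C_1, C_neg]; linear_combination h0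
      exact one_ne_zero (hind 1 (-lam) h1).1
    refine ⟨Q, P - C lam * Q, ?_, hR0, hRdeg, ⟨0, 1, 1, -lam, by norm_num, ?_⟩⟩
    · have h1 := hc.symm.add_mul_left_right (-(C lam))
      have h2 : P + Q * -(C lam) = P - C lam * Q := by ring
      rwa [h2] at h1
    · simp only [C_0, C_1, C_neg]
      ring
  · refine ⟨Q, P, hc.symm, hP, hgt, ⟨0, 1, 1, 0, by norm_num, ?_⟩⟩
    simp only [C_0, C_1]
    ring

/-- Existence of a standard form equivalent to `P/Q` for an independent pair. -/
lemma exists_stdForm (G H : F[X])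
    (hind : ∀ u v : F, C u * G + C v * H = 0 → u = 0 ∧ v = 0) :
    ∃ G' H', StdForm G' H' ∧ RatEquiv G H G' H' := by
  have hG : G ≠ 0 := by
    intro h0
    have := (hind 1 0 (by rw [h0, C_0, C_1]; ring)).1
    exact one_ne_zero this
  have hH : H ≠ 0 := by
    intro h0
    have := (hind 0 1 (by rw [h0, C_0, C_1]; ring)).2
    exact one_ne_zero this
  classical
  letI : GCDMonoid F[X] := EuclideanDomain.gcdMonoid F[X]
  set D : F[X] := GCDMonoid.gcd G H with hD
  have hD0 : D ≠ 0 := gcd_ne_zero_of_left hG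
  have hGe : D * (G / D) = G := EuclideanDomain.mul_div_cancel' hD0 (gcd_dvd_left G H)
  have hHe : D * (H / D) = H := EuclideanDomain.mul_div_cancel' hD0 (gcd_dvd_right G H)
  have hcop : IsCoprime (G / D) (H / D) := isCoprime_div_gcd_div_gcd hH
  have hind₁ : ∀ u v : F, C u * (G / D) + C v * (H / D) = 0 → u = 0 ∧ v = 0 := by
    intro u v huv
    apply hind u v
    have h1 : C u * G + C v * H = (C u * (G / D) + C v * (H / D)) * D := by
      linear_combination (-(C u)) * hGe + (-(C v)) * hHe
    rw [h1, huv, zero_mul]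
  have re₁ : RatEquiv G H (G / D) (H / D) := by
    refine ⟨1, 0, 0, 1, by norm_num, ?_⟩
    simp only [C_0, C_1, zero_mul, one_mul, zero_add, add_zero]
    linear_combination (H / D) * hGe - (G / D) * hHe
  obtain ⟨P, Q, hcPQ, hQ0, hdlt, re₂⟩ := exists_deg_lt hcop hind₁
  obtain ⟨G', H', hstd, re₃⟩ := stdForm_of_deg_lt hcPQ hQ0 hdlt
  have hHD0 : H / D ≠ 0 := right_div_gcd_ne_zero hH
  exact ⟨G', H', hstd, ratEquiv_trans hQ0 (ratEquiv_trans hHD0 re₁ re₂) re₃⟩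

end Aux

/-- A rational function in standard form `g/h` over the algebraic closure `K` of `k` is
equivalent to a rational function defined over `k` if and only if all coefficients of
`g` and `h` lie in `k`. -/
theorem stmt_2 {k K : Type*} [Field k] [Field K] [Algebra k K] [IsAlgClosure k K]
    (g h : K[X]) (hs : StdForm g h) :
    (∃ G H : k[X], H ≠ 0 ∧
        RatEquiv g h (G.map (algebraMap k K)) (H.map (algebraMap k K))) ↔
      (∀ n, g.coeff n ∈ (algebraMap k K).range) ∧
        (∀ n, h.coeff n ∈ (algebraMap k K).range) := by
  set φ : k →+* K := algebraMap k K with hφdef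
  have hφ : Function.Injective φ := φ.injective
  constructor
  · rintro ⟨Gk, Hk, hHk, hre⟩
    have hindgh := hs.indep
    obtain ⟨a, b, c, d, hdet, E⟩ := hre
    have hHm : Hk.map φ ≠ 0 := Polynomial.map_ne_zero hHk
    have hGm : Gk.map φ ≠ 0 := by
      intro h0
      rw [h0, zero_mul] at E
      have h1 : C a * g + C b * h = 0 :=
        (mul_eq_zero.mp E.symm).resolve_right hHm
      obtain ⟨ha, hb⟩ := hindgh a b h1
      exact hdet (by rw [ha, hb]; ring)
    have hindGH : ∀ u v : k, C u * Gk + C v * Hk = 0 → u = 0 ∧ v = 0 := by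
      intro u v huv
      have hm : C (φ u) * (Gk.map φ) + C (φ v) * (Hk.map φ) = 0 := by
        have h1 := congrArg (Polynomial.map φ) huv
        simpa only [Polynomial.map_add, Polynomial.map_mul, map_C,
          Polynomial.map_zero] using h1
      have h2 : (Gk.map φ) * (C (φ v) * (C c * g + C d * h)
          + C (φ u) * (C a * g + C b * h)) = 0 := by
        linear_combination C (φ v) * E + (C a * g + C b * h) * hm
      have h3 : C (φ v) * (C c * g + C d * h) + C (φ u) * (C a * g + C b * h) = 0 :=
        (mul_eq_zero.mp h2).resolve_left hGm
      have h4 : C (φ v * c + φ u * a) * g + C (φ v * d + φ u * b) * h = 0 := by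
        rw [C_add, C_mul, C_mul, C_add, C_mul, C_mul]
        linear_combination h3
      obtain ⟨e1, e2⟩ := hindgh _ _ h4
      have hv : φ v = 0 := by
        have h5 : φ v * (a * d - b * c) = 0 := by linear_combination a * e2 - b * e1
        exact (mul_eq_zero.mp h5).resolve_right hdet
      have hu : φ u = 0 := by
        have h6 : φ u * (a * d - b * c) = 0 := by linear_combination d * e1 - c * e2
        exact (mul_eq_zero.mp h6).resolve_right hdet
      exact ⟨hφ (hu.trans (map_zero φ).symm), hφ (hv.trans (map_zero φ).symm)⟩
    obtain ⟨G', H', hstd', hre'⟩ := exists_stdForm Gk Hk hindGH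
    have hstdm : StdForm (G'.map φ) (H'.map φ) := stdForm_map φ hstd'
    have hrem : RatEquiv (Gk.map φ) (Hk.map φ) (G'.map φ) (H'.map φ) :=
      ratEquiv_map φ hre'
    have hcomp : RatEquiv g h (G'.map φ) (H'.map φ) :=
      ratEquiv_trans hHm ⟨a, b, c, d, hdet, E⟩ hrem
    obtain ⟨hg', hh'⟩ := stdForm_unique hs hstdm hcomp
    constructor <;> intro n
    · rw [hg', coeff_map]; exact ⟨G'.coeff n, rfl⟩
    · rw [hh', coeff_map]; exact ⟨H'.coeff n, rfl⟩
  · rintro ⟨h1, h2⟩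
    obtain ⟨Gk, hGk⟩ := (mem_lifts (f := φ) g).mp ((lifts_iff_coeff_lifts g).mpr
      (fun n => by obtain ⟨x, hx⟩ := h1 n; exact ⟨x, hx⟩))
    obtain ⟨Hk, hHk⟩ := (mem_lifts (f := φ) h).mp ((lifts_iff_coeff_lifts h).mpr
      (fun n => by obtain ⟨x, hx⟩ := h2 n; exact ⟨x, hx⟩))
    refine ⟨Gk, Hk, ?_, ?_⟩
    · intro h0
      apply hs.2.1.ne_zero
      rw [← hHk, h0, Polynomial.map_zero]
    · rw [hGk, hHk]
      exact ⟨1, 0, 0, 1, by norm_num, by simp⟩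
end

section
/- Let k be a finite field of characteristic p > 3. There exists u ∈ k̄ \ k, algebraic of degree 2 over k, such that φ(u) = −(u² + 2u)/(2u+3) lies in k \ {0, 1}. -/
/-- Let `k` be a finite field of characteristic `p > 3` and `K` an algebraic closure of `k`.
There exists `u ∈ K \ k`, algebraic of degree 2 over `k`, such that
`φ(u) = -(u² + 2u)/(2u + 3)` lies in `k \ {0, 1}`. -/
theorem stmt_9 {k K : Type*} [Field k] [Finite k] [Field K] [Algebra k K]
    [IsAlgClosure k K] (p : ℕ) [Fact p.Prime] [CharP k p] (hp : 3 < p) :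
    ∃ u : K, u ∉ Set.range (algebraMap k K) ∧ (minpoly k u).natDegree = 2 ∧
      2 * u + 3 ≠ 0 ∧
      ∃ c : k, c ≠ 0 ∧ c ≠ 1 ∧ algebraMap k K c = -(u ^ 2 + 2 * u) / (2 * u + 3) := by
  have hKalg : IsAlgClosed K := IsAlgClosure.isAlgClosed k
  have hinj : Function.Injective (algebraMap k K) := (algebraMap k K).injective
  have h2k : (2 : k) ≠ 0 := by
    rw [show (2 : k) = ((2 : ℕ) : k) by norm_num, Ne, CharP.cast_eq_zero_iff k p]
    intro h
    have := Nat.le_of_dvd (by norm_num) h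
    omega
  have h3k : (3 : k) ≠ 0 := by
    rw [show (3 : k) = ((3 : ℕ) : k) by norm_num, Ne, CharP.cast_eq_zero_iff k p]
    intro h
    have := Nat.le_of_dvd (by norm_num) h
    omega
  have h3K : (3 : K) ≠ 0 := fun h =>
    h3k (hinj (by rw [map_ofNat, map_zero]; exact h))
  -- the map φ on k, with junk value at 2u+3=0
  set f : k → k := fun u => -(u ^ 2 + 2 * u) / (2 * u + 3) with hf
  have hni : ¬ Function.Injective f := by
    intro h
    have e0 : f 0 = 0 := by rw [hf]; norm_num
    have e1 : f (-(3 / 2)) = 0 := by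
      rw [hf]
      simp only
      rw [show (2 : k) * -(3 / 2) + 3 = 0 by field_simp; ring, div_zero]
    have h1 := h (e0.trans e1.symm)
    exact h3k ((div_eq_zero_iff.mp (neg_eq_zero.mp h1.symm)).resolve_right h2k)
  obtain ⟨c, hc⟩ : ∃ c : k, ∀ u, f u ≠ c := by
    by_contra h
    push_neg at h
    exact hni (Finite.injective_iff_surjective.mpr fun c => h c)
  have hc0 : c ≠ 0 := by
    intro h
    apply hc 0
    simp [hf, h]
  have hc1 : c ≠ 1 := by
    intro h
    apply hc (-1)
    rw [hf, h]
    norm_num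
  -- no root in k of the quadratic
  have hnoroot : ∀ v : k, v ^ 2 + (2 + 2 * c) * v + 3 * c ≠ 0 := by
    intro v hv
    have hden : 2 * v + 3 ≠ 0 := by
      intro h
      apply h3k
      have : (-3 : k) = 0 := by
        linear_combination 4 * hv - (2 * v + 1 + 4 * c) * h
      linear_combination -this
    apply hc v
    rw [hf]
    have : -(v ^ 2 + 2 * v) = c * (2 * v + 3) := by linear_combination -hv
    field_simp [hden, this]
    have hden' : v * 2 + 3 ≠ 0 := by rwa [mul_comm]
    rw [← neg_div, div_eq_iff hden']
    linear_combination -hv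
  -- the quadratic over k
  set P : Polynomial k := Polynomial.X ^ 2 + Polynomial.C (2 + 2 * c) * Polynomial.X
      + Polynomial.C (3 * c) with hP
  have hPdeg : P.natDegree = 2 := by
    rw [hP]; compute_degree!
  have hPmonic : P.Monic := by
    rw [hP]; monicity!
  obtain ⟨u, hu⟩ := IsAlgClosed.exists_root (P.map (algebraMap k K))
    (by
      rw [Polynomial.degree_map, Polynomial.degree_eq_natDegree hPmonic.ne_zero, hPdeg]
      exact by norm_num)
  have haev : Polynomial.aeval u P = 0 := by
    rwa [Polynomial.aeval_def, ← Polynomial.eval_map]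
  have hueq : u ^ 2 + (2 + 2 * algebraMap k K c) * u + 3 * algebraMap k K c = 0 := by
    have h := haev
    simp only [hP, map_add, map_mul, map_pow, Polynomial.aeval_X, Polynomial.aeval_C,
      map_ofNat, map_one] at h
    push_cast at h
    linear_combination h
  have h2u3 : 2 * u + 3 ≠ 0 := by
    intro h
    apply h3K
    have : (-3 : K) = 0 := by
      linear_combination 4 * hueq - (2 * u + 1 + 4 * algebraMap k K c) * h
    linear_combination -this
  have hurange : u ∉ Set.range (algebraMap k K) := by
    rintro ⟨v, rfl⟩
    apply hnoroot v
    apply hinj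
    simp only [map_add, map_mul, map_pow, map_ofNat, map_zero]
    linear_combination hueq
  have hint : IsIntegral k u := ⟨P, hPmonic, by rwa [← Polynomial.aeval_def]⟩
  refine ⟨u, hurange, ?_, h2u3, c, hc0, hc1, ?_⟩
  · have hle : (minpoly k u).natDegree ≤ 2 := by
      rw [← hPdeg]
      exact Polynomial.natDegree_le_of_dvd (minpoly.dvd k u haev) hPmonic.ne_zero
    have hge : 2 ≤ (minpoly k u).natDegree := by
      rw [minpoly.two_le_natDegree_iff hint]
      exact fun h => hurange h
    omega
  · rw [eq_div_iff h2u3]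
    linear_combination hueq
end

section
/- Let f = g/h be a separable rational function over an algebraically closed field with g, h coprime, and let c be a root of the Wronskian h g' − g h' of multiplicity ℓ. If the characteristic of the field does not divide the ramification index e of f at c, then ℓ = e − 1, where e is the multiplicity of c as a root of g(x) − f(c)·h(x) (when f(c) ≠ ∞). -/
open Polynomial

/-- Let `f = g/h` be a separable rational function over an algebraically closed field with
`g, h` coprime, and `c` a point with `h(c) ≠ 0`.  Let `e` be the ramification index of `f`
at `c`, i.e. the multiplicity of `c` as a root of `g - f(c)·h`.  If the characteristic does
not divide `e` (tame ramification), then the multiplicity `ℓ` of `c` as a root of the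
Wronskian `h g' - g h'` equals `e - 1`. -/
theorem stmt_12 {K : Type*} [Field K] [IsAlgClosed K] (g h : K[X])
    (hcop : IsCoprime g h) (hsep : wron g h ≠ 0) (c : K) (hc : h.eval c ≠ 0)
    (e : ℕ) (he : e = rootMultiplicity c (g - C (g.eval c / h.eval c) * h))
    (htame : ¬ (ringChar K ∣ e)) :
    rootMultiplicity c (wron g h) = e - 1 := by
  have he0 : e ≠ 0 := fun h0 => htame (h0 ▸ dvd_zero _)
  set a : K := g.eval c / h.eval c with ha
  set p : K[X] := g - C a * h with hpdef
  have hp0 : p ≠ 0 := by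
    intro h0
    apply he0
    rw [he, h0, rootMultiplicity_zero]
  have heq : e = rootMultiplicity c p := he
  set q : K[X] := p /ₘ (X - C c) ^ e with hqdef
  have hfac : (X - C c) ^ e * q = p := by
    rw [hqdef, heq]; exact pow_mul_divByMonic_rootMultiplicity_eq p c
  have hq0 : q.eval c ≠ 0 := by
    rw [hqdef, heq]; exact eval_divByMonic_pow_rootMultiplicity_ne_zero c hp0
  have heK : (e : K) ≠ 0 := fun h0 =>
    htame ((CharP.cast_eq_zero_iff K (ringChar K) e).mp h0)
  obtain ⟨m, rfl⟩ : ∃ m, e = m + 1 := ⟨e - 1, (Nat.succ_pred_eq_of_pos (Nat.pos_of_ne_zero he0)).symm⟩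
  -- the Wronskian of g,h equals that of p,h
  have hwr : wron g h = h * derivative p - p * derivative h := by
    simp only [wron, hpdef, derivative_sub, derivative_mul, derivative_C]
    ring
  set r : K[X] := C ((m + 1 : ℕ) : K) * h * q + (X - C c) * (h * derivative q - q * derivative h)
    with hrdef
  have hkey : wron g h = (X - C c) ^ m * r := by
    rw [hwr, ← hfac, hrdef, derivative_mul, derivative_pow, derivative_sub, derivative_X,
      derivative_C, sub_zero, Nat.add_sub_cancel, pow_succ]
    ring
  have hre : r.eval c ≠ 0 := by
    simp only [hrdef, eval_add, eval_mul, eval_sub, eval_C, eval_X, sub_self, zero_mul,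
      add_zero]
    exact mul_ne_zero (mul_ne_zero heK hc) hq0
  rw [hkey, rootMultiplicity_mul (hkey ▸ hsep), rootMultiplicity_X_sub_C_pow,
    rootMultiplicity_eq_zero (fun hr => hre hr)]
  simp
end

section
/- Let k be a field of characteristic p > 3 and u ∈ k̄ with u ∉ {−1, −2, −3/2}. The rational function f_u(x) = (x³ + u x²)/((2u+3)x − (u+2)) is simply ramified (every root of its Wronskian is a simple root and the differential length at infinity is at most 1) if and only if φ(u) = −(u²+2u)/(2u+3) ∉ {0, 1}. -/
open Polynomial

/-- Over an algebraically closed field of characteristic `p > 3`, for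
`u ∉ {-1, -2, -3/2}`, the rational function `f_u = (x³ + u x²)/((2u+3)x - (u+2))` is
simply ramified (its Wronskian is squarefree, i.e. has only simple roots, and the
differential length `2d - 2 - deg Wr = 4 - deg Wr` at infinity is at most 1) if and only
if `φ(u) = -(u² + 2u)/(2u+3) ∉ {0, 1}`. -/
theorem stmt_15 {K : Type*} [Field K] [IsAlgClosed K] (p : ℕ) [Fact p.Prime] [CharP K p]
    (hp : 3 < p) (u : K) (hu1 : u ≠ -1) (hu2 : u ≠ -2) (hu3 : 2 * u + 3 ≠ 0) :
    (Squarefree (wron (X ^ 3 + C u * X ^ 2) (C (2 * u + 3) * X - C (u + 2))) ∧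
        2 * 3 - 2 - (wron (X ^ 3 + C u * X ^ 2) (C (2 * u + 3) * X - C (u + 2))).natDegree
          ≤ 1) ↔
      (-(u ^ 2 + 2 * u) / (2 * u + 3) ≠ 0 ∧ -(u ^ 2 + 2 * u) / (2 * u + 3) ≠ 1) := by
  have h2 : (2 : K) ≠ 0 := fun h => by
    have := (CharP.cast_eq_zero_iff K p 2).mp (by exact_mod_cast h)
    have := Nat.le_of_dvd two_pos this; omega
  set φ : K := -(u ^ 2 + 2 * u) / (2 * u + 3) with hφ
  have hφmul : (2 * u + 3) * φ = -(u ^ 2 + 2 * u) := by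
    rw [hφ, mul_div_assoc', mul_div_cancel_left₀ _ hu3]
  have key : wron (X ^ 3 + C u * X ^ 2) (C (2 * u + 3) * X - C (u + 2))
      = C (2 * (2 * u + 3)) * (X * (X - 1) * (X - C φ)) := by
    have : C (2 * (2 * u + 3)) * (X * (X - 1) * (X - C φ))
        = C 2 * (X * (X - 1) * (C (2 * u + 3) * X - C ((2 * u + 3) * φ))) := by
      simp only [C_mul]; ring
    rw [this, hφmul]
    simp only [wron, derivative_add, derivative_mul, derivative_C_mul, derivative_X_pow,
      derivative_C, derivative_sub, derivative_X, C_mul, C_add, C_neg, C_pow, map_ofNat]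
    push_cast
    simp only [map_ofNat, derivative_ofNat, derivative_one]
    ring
  rw [key]
  have hc : (2 * (2 * u + 3) : K) ≠ 0 := mul_ne_zero h2 hu3
  constructor
  · rintro ⟨hsq, -⟩
    constructor
    · intro h0
      rw [h0, map_zero, sub_zero] at hsq
      exact not_isUnit_X (hsq X ⟨C (2 * (2 * u + 3)) * (X - 1), by ring⟩)
    · intro h1
      rw [h1, map_one] at hsq
      exact Polynomial.not_isUnit_X_sub_C 1
        (hsq (X - 1) ⟨C (2 * (2 * u + 3)) * X, by ring⟩)
  · rintro ⟨h0, h1⟩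
    have c01 : IsCoprime (X : K[X]) (X - 1) := by
      have := isCoprime_X_sub_C_of_isUnit_sub
        (a := (0 : K)) (b := 1) (by norm_num : ((0 : K) - 1) ≠ 0).isUnit
      simpa using this
    have c0φ : IsCoprime (X : K[X]) (X - C φ) := by
      have := isCoprime_X_sub_C_of_isUnit_sub
        (a := (0 : K)) (b := φ) ((sub_ne_zero.mpr (Ne.symm h0)).isUnit)
      simpa using this
    have c1φ : IsCoprime (X - 1 : K[X]) (X - C φ) := by
      have := isCoprime_X_sub_C_of_isUnit_sub
        (a := (1 : K)) (b := φ) ((sub_ne_zero.mpr (Ne.symm h1)).isUnit)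
      simpa using this
    have hsep : (X * (X - 1) * (X - C φ) : K[X]).Separable := by
      have s1 : (X - 1 : K[X]).Separable := by
        simpa using (separable_X_sub_C (x := (1 : K)))
      have sX : (X : K[X]).Separable := by
        simpa using (separable_X_sub_C (x := (0 : K)))
      exact (sX.mul s1 c01).mul separable_X_sub_C (c0φ.mul_left c1φ)
    have hsqP : Squarefree (X * (X - 1) * (X - C φ) : K[X]) := hsep.squarefree
    have hdvd : C (2 * (2 * u + 3)) * (X * (X - 1) * (X - C φ)) ∣
        (X * (X - 1) * (X - C φ) : K[X]) :=
      ⟨C (2 * (2 * u + 3))⁻¹, by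
        rw [mul_comm (C (2 * (2 * u + 3))) _, mul_assoc, mul_assoc, ← C_mul,
          mul_inv_cancel₀ hc, C_1, mul_one]⟩
    refine ⟨hsqP.squarefree_of_dvd hdvd, ?_⟩
    have hdeg : (C (2 * (2 * u + 3)) * (X * (X - 1) * (X - C φ))).natDegree = 3 := by
      have e1 : (X - 1 : K[X]) = X - C 1 := by rw [C_1]
      rw [natDegree_C_mul hc, e1,
        (monic_X.mul (monic_X_sub_C 1)).natDegree_mul (monic_X_sub_C φ),
        monic_X.natDegree_mul (monic_X_sub_C 1), natDegree_X, natDegree_X_sub_C,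
        natDegree_X_sub_C]
    rw [hdeg]
end
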